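/- Let n, p, k be integers with 1 ≤ k < p ≤ n and k ≤ n−p, let x ∈ Φ, and let c̲, d ∈ ℝ^n_{≥0} and Γ ≥ 0. Then the supremum over c ∈ U^c, α ∈ ℝ, β ≥ 0 of p·α + (p−k)·β − Σ_{i=1}^n [α + β·x_i − c_i]_+ (which equals max_{c ∈ U^c} min_{y ∈ Φ^k_x} Σ_i c_i·y_i) is attained at some triple (c, α, β) satisfying: β = 0, or α ∈ D, or α + β ∈ D, where D = {c̲_1,…,c̲_n} ∪ {c̲_1+d_1,…,c̲_n+d_n}. -/

import Mathlib

open Finset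

noncomputable section

/-- The set of feasible selections: 0-1 vectors with exactly `p` ones. -/
def selPhi (n p : ℕ) : Set (Fin n → ℝ) :=
  {x | (∀ i, x i = 0 ∨ x i = 1) ∧ (∑ i, x i) = (p : ℝ)}

/-- The recovery set `Φ^k_x`. -/
def selPhiK (n p k : ℕ) (x : Fin n → ℝ) : Set (Fin n → ℝ) :=
  {y | (∀ i, y i = 0 ∨ y i = 1) ∧ (∑ i, y i) = (p : ℝ) ∧
    (p : ℝ) - (k : ℝ) ≤ ∑ i, x i * y i}

/-- The continuous budgeted uncertainty set `U^c`. -/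
def Uc (n : ℕ) (cl d : Fin n → ℝ) (Γ : ℝ) : Set (Fin n → ℝ) :=
  {c | ∃ δ : Fin n → ℝ, (∀ i, 0 ≤ δ i ∧ δ i ≤ d i) ∧ (∑ i, δ i) ≤ Γ ∧
    c = fun i => cl i + δ i}

/-- The optimal value `min_{y ∈ S} Σ c_i y_i` of the incremental problem. -/
def incVal (n : ℕ) (S : Set (Fin n → ℝ)) (c : Fin n → ℝ) : ℝ :=
  sInf {v | ∃ y ∈ S, v = ∑ i, c i * y i}

/-!
Weak duality for the recovery problem is the hinge inequality `∑ yᵢ aᵢ ≤ ∑ [aᵢ]₊`, and an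
exchange argument on an optimal recovery `y` produces `α, β ≥ 0` with `g c α β = c ⬝ y`; so
`max_{α, β ≥ 0} g c α β` is the incremental optimum. For fixed `(α, β)`, maximising `g` over
`c ∈ U^c` is a budgeted reduction of the hinge terms, with value the landscape
`F (α, β) = g c̲ α β + min Γ (∑ min dᵢ [α + β xᵢ - c̲ᵢ]₊)`.
Clamping `α` and `α + β` into `[min c̲, max (c̲ + d)]` does not decrease `F` (this uses
`k ≤ n - p`), so `F` attains its maximum on a compact triangle. Off the lines `β = 0`,
`α ∈ D`, `α + β ∈ D`, `F` is locally the minimum of two affine functions, hence constant along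
some line through a maximiser; so the maximiser farthest from the origin lies on one of them.
-/

open Filter Topology Module

section HingeSums
variable {ι : Type*} [Fintype ι]

lemma sum_mul_le_sum_max_zero {y : ι → ℝ} (hy : ∀ i, 0 ≤ y i ∧ y i ≤ 1) (a : ι → ℝ) :
    ∑ i, y i * a i ≤ ∑ i, max (a i) 0 :=
  Finset.sum_le_sum fun i _ => by
    nlinarith [hy i, le_max_left (a i) 0, le_max_right (a i) 0]

lemma sum_max_zero_eq_sum_mul {y a : ι → ℝ} (hy : ∀ i, y i = 0 ∨ y i = 1)
    (hpos : ∀ i, y i = 1 → 0 ≤ a i) (hneg : ∀ i, y i = 0 → a i ≤ 0) :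
    ∑ i, max (a i) 0 = ∑ i, y i * a i :=
  Finset.sum_congr rfl fun i _ => by
    rcases hy i with h | h
    · rw [h, zero_mul, max_eq_right (hneg i h)]
    · rw [h, one_mul, max_eq_left (hpos i h)]

lemma exists_nat_eq_sum_of_zero_or_one {f : ι → ℝ} (hf : ∀ i, f i = 0 ∨ f i = 1) :
    ∃ N : ℕ, ∑ i, f i = N := by
  classical
  refine ⟨#{i | f i = 1}, ?_⟩
  rw [Finset.natCast_card_filter]
  exact Finset.sum_congr rfl fun i _ => by rcases hf i with h | h <;> simp [h]

lemma exists_max_image_of_sum_pos {f : ι → ℝ} (hf : ∀ i, f i = 0 ∨ f i = 1)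
    (h : 0 < ∑ i, f i) (c : ι → ℝ) : ∃ i, f i = 1 ∧ ∀ j, f j = 1 → c j ≤ c i := by
  classical
  obtain ⟨i, -, hi⟩ := Finset.exists_ne_zero_of_sum_ne_zero h.ne'
  obtain ⟨i₀, hi₀, hmax⟩ := ({j | f j = 1} : Finset ι).exists_max_image c
    ⟨i, by simpa using (hf i).resolve_left hi⟩
  simp only [Finset.mem_filter, Finset.mem_univ, true_and] at hi₀ hmax
  exact ⟨i₀, hi₀, hmax⟩

lemma sum_mul_comp_swap [DecidableEq ι] (a y : ι → ℝ) {i j : ι} (hij : i ≠ j) :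
    ∑ m, a m * y (Equiv.swap i j m) = ∑ m, a m * y m + (a i - a j) * (y j - y i) := by
  rw [← sub_eq_iff_eq_add', ← Finset.sum_sub_distrib,
    Fintype.sum_eq_add i j hij fun m hm => by
      rw [Equiv.swap_apply_of_ne_of_ne hm.1 hm.2, sub_self]]
  simp only [Equiv.swap_apply_left, Equiv.swap_apply_right]
  ring

end HingeSums

section Duality
variable {ι : Type*} [Fintype ι]

def dualObj (p k : ℕ) (x c : ι → ℝ) (α β : ℝ) : ℝ :=
  (p : ℝ) * α + ((p : ℝ) - (k : ℝ)) * β - ∑ i, max (α + β * x i - c i) 0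

variable {p k : ℕ}

lemma sum_mul_add_mul_sub (x c y : ι → ℝ) (α β : ℝ) :
    ∑ i, y i * (α + β * x i - c i)
      = α * ∑ i, y i + β * ∑ i, x i * y i - ∑ i, c i * y i := by
  simp only [Finset.mul_sum, ← Finset.sum_add_distrib, ← Finset.sum_sub_distrib]
  exact Finset.sum_congr rfl fun i _ => by ring

lemma dualObj_le_sum_mul {x c y : ι → ℝ} (hy01 : ∀ i, 0 ≤ y i ∧ y i ≤ 1)
    (hy : ∑ i, y i = p) (hxy : (p : ℝ) - k ≤ ∑ i, x i * y i) (α : ℝ) {β : ℝ} (hβ : 0 ≤ β) :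
    dualObj p k x c α β ≤ ∑ i, c i * y i := by
  have hhinge := sum_mul_le_sum_max_zero hy01 fun i => α + β * x i - c i
  rw [sum_mul_add_mul_sub, hy] at hhinge
  unfold dualObj
  nlinarith [mul_le_mul_of_nonneg_left hxy hβ]

lemma dualObj_eq_of_threshold {x c y : ι → ℝ} {α β : ℝ} (hy01 : ∀ i, y i = 0 ∨ y i = 1)
    (hy : ∑ i, y i = p) (hpos : ∀ i, y i = 1 → c i ≤ α + β * x i)
    (hneg : ∀ i, y i = 0 → α + β * x i ≤ c i) :
    dualObj p k x c α β = ∑ i, c i * y i + β * ((p : ℝ) - k - ∑ i, x i * y i) := by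
  have hhinge := sum_max_zero_eq_sum_mul (a := fun i => α + β * x i - c i) hy01
    (fun i h => sub_nonneg.2 (hpos i h)) (fun i h => sub_nonpos.2 (hneg i h))
  rw [sum_mul_add_mul_sub, hy] at hhinge
  unfold dualObj
  rw [hhinge]
  ring

end Duality

section Recovery
variable {n p k : ℕ} {x : Fin n → ℝ}

lemma self_mem_selPhiK (hx : x ∈ selPhi n p) : x ∈ selPhiK n p k x := by
  refine ⟨hx.1, hx.2, ?_⟩
  have hxx : ∑ i, x i * x i = ∑ i, x i :=
    Finset.sum_congr rfl fun i _ => by rcases hx.1 i with h | h <;> simp [h]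
  rw [hxx, hx.2]
  linarith [(Nat.cast_nonneg k : (0 : ℝ) ≤ k)]

lemma selPhiK_finite : (selPhiK n p k x).Finite :=
  (Set.Finite.pi fun _ => (Set.toFinite ({0, 1} : Set ℝ))).subset fun _ hy i _ => hy.1 i

lemma dualObj_le_incVal (hx : x ∈ selPhi n p) (c : Fin n → ℝ) (α : ℝ) {β : ℝ} (hβ : 0 ≤ β) :
    dualObj p k x c α β ≤ incVal n (selPhiK n p k x) c := by
  refine le_csInf ⟨_, x, self_mem_selPhiK hx, rfl⟩ ?_
  rintro _ ⟨y, ⟨hy01, hy, hxy⟩, rfl⟩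
  exact dualObj_le_sum_mul (fun i => by rcases hy01 i with h | h <;> simp [h]) hy hxy α hβ

lemma incVal_eq_of_forall_le {S : Set (Fin n → ℝ)} {c y : Fin n → ℝ} (hy : y ∈ S)
    (hmin : ∀ y' ∈ S, ∑ i, c i * y i ≤ ∑ i, c i * y' i) : incVal n S c = ∑ i, c i * y i :=
  IsLeast.csInf_eq ⟨⟨y, hy, rfl⟩, by rintro _ ⟨y', hy', rfl⟩; exact hmin y' hy'⟩

-- `∑ m, x m * y m + (x j - x i)` is the overlap with `x` after exchanging `i` for `j`.
lemma le_of_exchange {c y : Fin n → ℝ} (hy : y ∈ selPhiK n p k x)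
    (hmin : ∀ y' ∈ selPhiK n p k x, ∑ m, c m * y m ≤ ∑ m, c m * y' m) {i j : Fin n}
    (hi : y i = 1) (hj : y j = 0) (hfeas : (p : ℝ) - k ≤ ∑ m, x m * y m + (x j - x i)) :
    c i ≤ c j := by
  obtain ⟨hy01, hsum, -⟩ := hy
  have hij : i ≠ j := by rintro rfl; linarith
  have hswap : (fun m => y (Equiv.swap i j m)) ∈ selPhiK n p k x := by
    refine ⟨fun m => hy01 _, by rwa [Equiv.sum_comp (Equiv.swap i j) y], ?_⟩
    rw [sum_mul_comp_swap x y hij, hi, hj]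
    linarith
  have := hmin _ hswap
  rw [sum_mul_comp_swap c y hij, hi, hj] at this
  linarith

-- With slack in the recovery constraint every exchange is feasible, so `β = 0` works.
lemma exists_dualObj_eq_of_slack {c y : Fin n → ℝ} (hx : ∀ i, x i = 0 ∨ x i = 1)
    (hy : y ∈ selPhiK n p k x)
    (hmin : ∀ y' ∈ selPhiK n p k x, ∑ m, c m * y m ≤ ∑ m, c m * y' m) (hp : 1 ≤ p)
    (hslack : (p : ℝ) - k + 1 ≤ ∑ m, x m * y m) :
    ∃ α, dualObj p k x c α 0 = ∑ m, c m * y m := by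
  have hexchange := fun {i j} => le_of_exchange hy hmin (i := i) (j := j)
  obtain ⟨hy01, hsum, -⟩ := hy
  obtain ⟨i₀, hi₀, hmax⟩ := exists_max_image_of_sum_pos hy01
    (by rw [hsum]; exact_mod_cast hp) c
  refine ⟨c i₀, ?_⟩
  rw [dualObj_eq_of_threshold hy01 hsum (fun m hm => by simpa using hmax m hm)
    (fun j hj => by
      simpa using hexchange hi₀ hj (by
        rcases hx i₀ with h | h <;> rcases hx j with h' | h' <;> simp only [h, h'] <;> linarith))]
  ring

lemma exists_dualObj_eq_of_tight {c y : Fin n → ℝ} (hx : ∀ i, x i = 0 ∨ x i = 1)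
    (hy : y ∈ selPhiK n p k x)
    (hmin : ∀ y' ∈ selPhiK n p k x, ∑ m, c m * y m ≤ ∑ m, c m * y' m) (hp : 1 ≤ p)
    (hk1 : 1 ≤ k) (htight : ∑ m, x m * y m = (p : ℝ) - k) :
    ∃ α β, 0 ≤ β ∧ dualObj p k x c α β = ∑ m, c m * y m := by
  have hexchange := fun {i j} => le_of_exchange hy hmin (i := i) (j := j)
  obtain ⟨hy01, hsum, -⟩ := hy
  have hk : (1 : ℝ) ≤ k := by exact_mod_cast hk1
  obtain ⟨i₀, hi₀, hmax⟩ := exists_max_image_of_sum_pos hy01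
    (by rw [hsum]; exact_mod_cast hp) c
  have hA : 0 < ∑ m, y m * (1 - x m) := by
    have : ∑ m, y m * (1 - x m) = ∑ m, y m - ∑ m, x m * y m := by
      rw [← Finset.sum_sub_distrib]; exact Finset.sum_congr rfl fun m _ => by ring
    linarith
  obtain ⟨a₀, ha₀, hAmax⟩ := exists_max_image_of_sum_pos (fun m => by
    rcases hx m with h | h <;> rcases hy01 m with h' | h' <;> simp [h, h']) hA c
  have ha₀' : y a₀ = 1 ∧ x a₀ = 0 := by
    rcases hx a₀ with h | h <;> rcases hy01 a₀ with h' | h' <;> simp_all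
  -- `α` is the largest chosen cost off `x`, `α + β` the largest chosen cost
  refine ⟨c a₀, c i₀ - c a₀, sub_nonneg.2 (hmax a₀ ha₀'.1), ?_⟩
  rw [dualObj_eq_of_threshold hy01 hsum (fun m hm => ?_) (fun j hj => ?_), htight]
  · ring
  · rcases hx m with h | h
    · simpa [h] using hAmax m (by simp [h, hm])
    · simpa [h] using hmax m hm
  · rcases hx j with h | h
    · simpa [h] using hexchange ha₀'.1 hj (by rw [h, ha₀'.2, htight]; linarith)
    · have : c i₀ ≤ c j := hexchange hi₀ hj (by
        rcases hx i₀ with h' | h' <;> simp only [h, h', htight] <;> linarith)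
      simpa [h] using this

lemma exists_dualObj_eq_incVal (hk1 : 1 ≤ k) (hkp : k ≤ p) (hx : x ∈ selPhi n p)
    (c : Fin n → ℝ) :
    ∃ α β : ℝ, 0 ≤ β ∧ dualObj p k x c α β = incVal n (selPhiK n p k x) c := by
  obtain ⟨y, hy, hmin⟩ := Set.exists_min_image _ (fun y => ∑ i, c i * y i) selPhiK_finite
    ⟨x, self_mem_selPhiK hx⟩
  rw [incVal_eq_of_forall_le hy hmin]
  obtain ⟨N, hN⟩ := exists_nat_eq_sum_of_zero_or_one (f := fun m => x m * y m) fun m => by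
    rcases hx.1 m with h | h <;> rcases hy.1 m with h' | h' <;> simp [h, h']
  have hpk : ((p - k : ℕ) : ℝ) = p - k := Nat.cast_sub hkp
  have hN' : p - k ≤ N := by exact_mod_cast hpk ▸ hN ▸ hy.2.2
  rcases hN'.lt_or_eq with hslack | htight
  · obtain ⟨α, hα⟩ := exists_dualObj_eq_of_slack hx.1 hy hmin (by omega) <| by
      rw [hN, ← hpk]; exact_mod_cast hslack
    exact ⟨α, 0, le_rfl, hα⟩
  · exact exists_dualObj_eq_of_tight hx.1 hy hmin (by omega) hk1 (by rw [hN, ← htight, hpk])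

end Recovery

section Budget

lemma max_zero_sub_max_sub_le_min (a : ℝ) {δ : ℝ} (hδ : 0 ≤ δ) :
    max a 0 - max (a - δ) 0 ≤ min δ (max a 0) := by
  have h₁ := le_max_left (a - δ) 0
  have h₂ := le_max_right (a - δ) 0
  have : max a 0 ≤ max (a - δ) 0 + δ := max_le (by linarith) (by linarith)
  exact le_min (by linarith) (by linarith)

lemma max_sub_zero_eq_of_le {a δ : ℝ} (hδ : 0 ≤ δ) (h : δ ≤ max a 0) :
    max (a - δ) 0 = max a 0 - δ := by
  rcases le_total a 0 with ha | ha
  · rw [max_eq_right ha] at h ⊢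
    rw [le_antisymm h hδ, sub_zero, sub_zero, max_eq_right ha]
  · rw [max_eq_left ha] at h ⊢
    exact max_eq_left (by linarith)

variable {ι : Type*} [Fintype ι] {a d : ι → ℝ} {Γ : ℝ}

lemma sum_max_zero_sub_min_le {δ : ι → ℝ} (hδ : ∀ i, 0 ≤ δ i ∧ δ i ≤ d i) (hΓ : ∑ i, δ i ≤ Γ) :
    ∑ i, max (a i) 0 - min Γ (∑ i, min (d i) (max (a i) 0)) ≤ ∑ i, max (a i - δ i) 0 := by
  have hterm i := max_zero_sub_max_sub_le_min (a i) (hδ i).1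
  have h₁ : ∑ i, (max (a i) 0 - max (a i - δ i) 0) ≤ Γ :=
    (Finset.sum_le_sum fun i _ => (hterm i).trans (min_le_left _ _)).trans hΓ
  have h₂ : ∑ i, (max (a i) 0 - max (a i - δ i) 0) ≤ ∑ i, min (d i) (max (a i) 0) :=
    Finset.sum_le_sum fun i _ => (hterm i).trans (min_le_min_right _ (hδ i).2)
  rw [Finset.sum_sub_distrib] at h₁ h₂
  linarith [le_min h₁ h₂]

lemma exists_sum_max_sub_eq (hd : ∀ i, 0 ≤ d i) (hΓ : 0 ≤ Γ) :
    ∃ δ : ι → ℝ, (∀ i, 0 ≤ δ i ∧ δ i ≤ d i) ∧ ∑ i, δ i ≤ Γ ∧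
      ∑ i, max (a i - δ i) 0 = ∑ i, max (a i) 0 - min Γ (∑ i, min (d i) (max (a i) 0)) := by
  set w := fun i => min (d i) (max (a i) 0)
  have hw : ∀ i, 0 ≤ w i := fun i => le_min (hd i) (le_max_right _ _)
  -- scale the greedy reductions `w` down uniformly until they fit in the budget
  obtain ⟨θ, hθ0, hθ1, hθ⟩ : ∃ θ : ℝ, 0 ≤ θ ∧ θ ≤ 1 ∧ θ * ∑ i, w i = min Γ (∑ i, w i) := by
    rcases le_or_gt (∑ i, w i) Γ with hW | hW
    · exact ⟨1, zero_le_one, le_rfl, by rw [one_mul, min_eq_right hW]⟩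
    · have hWpos : 0 < ∑ i, w i := hΓ.trans_lt hW
      exact ⟨Γ / ∑ i, w i, div_nonneg hΓ hWpos.le, (div_le_one hWpos).2 hW.le,
        by rw [div_mul_cancel₀ _ hWpos.ne', min_eq_left hW.le]⟩
  have hδw : ∀ i, θ * w i ≤ w i := fun i => mul_le_of_le_one_left (hw i) hθ1
  refine ⟨fun i => θ * w i, fun i => ⟨mul_nonneg hθ0 (hw i), (hδw i).trans (min_le_left _ _)⟩,
    by rw [← Finset.mul_sum, hθ]; exact min_le_left _ _, ?_⟩
  rw [Finset.sum_congr rfl fun i _ => max_sub_zero_eq_of_le (mul_nonneg hθ0 (hw i))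
    ((hδw i).trans (min_le_right _ _)), Finset.sum_sub_distrib, ← Finset.mul_sum, hθ]

end Budget

section Landscape

def breakpoints {ι : Type*} (cl d : ι → ℝ) : Set ℝ :=
  Set.range cl ∪ Set.range (fun i => cl i + d i)

variable {ι : Type*} [Fintype ι]

def landscape (p k : ℕ) (x cl d : ι → ℝ) (Γ : ℝ) (q : ℝ × ℝ) : ℝ :=
  dualObj p k x cl q.1 q.2 + min Γ (∑ i, min (d i) (max (q.1 + q.2 * x i - cl i) 0))

variable {n p k : ℕ} {x cl d : Fin n → ℝ} {Γ : ℝ}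

lemma dualObj_le_landscape {c : Fin n → ℝ} (hc : c ∈ Uc n cl d Γ) (α β : ℝ) :
    dualObj p k x c α β ≤ landscape p k x cl d Γ (α, β) := by
  obtain ⟨δ, hδ, hΓ, rfl⟩ := hc
  have := sum_max_zero_sub_min_le (a := fun i => α + β * x i - cl i) hδ hΓ
  simp only [landscape, dualObj, sub_add_eq_sub_sub] at this ⊢
  linarith

lemma exists_dualObj_eq_landscape (hd : ∀ i, 0 ≤ d i) (hΓ : 0 ≤ Γ) (α β : ℝ) :
    ∃ c ∈ Uc n cl d Γ, dualObj p k x c α β = landscape p k x cl d Γ (α, β) := by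
  obtain ⟨δ, hδ, hδΓ, hsum⟩ := exists_sum_max_sub_eq (a := fun i => α + β * x i - cl i) hd hΓ
  refine ⟨_, ⟨δ, hδ, hδΓ, rfl⟩, ?_⟩
  simp only [landscape, dualObj, sub_add_eq_sub_sub] at hsum ⊢
  linarith

end Landscape

section Clamp
variable {L H : ℝ}

lemma max_sub_zero_sub_clamp {c : ℝ} (hL : L ≤ c) (hH : c ≤ H) (t : ℝ) :
    max (t - c) 0 - max (max L (min t H) - c) 0 = max (t - H) 0 := by
  simp only [max_def, min_def]; split_ifs <;> linarith

lemma min_max_sub_clamp {c d : ℝ} (hL : L ≤ c) (hH : c + d ≤ H) (hd : 0 ≤ d) (t : ℝ) :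
    min d (max (max L (min t H) - c) 0) = min d (max (t - c) 0) := by
  simp only [max_def, min_def]; split_ifs <;> linarith

lemma sub_clamp_le (hLH : L ≤ H) (t : ℝ) : t - max L (min t H) ≤ max (t - H) 0 := by
  simp only [max_def, min_def]; split_ifs <;> linarith

lemma apply_add_mul_of_zero_or_one {x : ℝ} (hx : x = 0 ∨ x = 1) (f : ℝ → ℝ) (α β : ℝ) :
    f (α + β * x) = (1 - x) * f α + x * f (α + β) := by
  rcases hx with rfl | rfl <;> simp

end Clamp

section Triangle

def triangle (L H : ℝ) : Set (ℝ × ℝ) := {q | L ≤ q.1 ∧ 0 ≤ q.2 ∧ q.1 + q.2 ≤ H}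

lemma isCompact_triangle (L H : ℝ) : IsCompact (triangle L H) := by
  refine (isCompact_Icc.prod isCompact_Icc).of_isClosed_subset ?_
    (fun q ⟨h₁, h₂, h₃⟩ => ⟨⟨h₁, by linarith⟩, ⟨h₂, by linarith⟩⟩ :
      triangle L H ⊆ Set.Icc L H ×ˢ Set.Icc 0 (H - L))
  simp only [triangle, Set.ofPred_and]
  exact (isClosed_le continuous_const continuous_fst).inter
    ((isClosed_le continuous_const continuous_snd).inter
      (isClosed_le (continuous_fst.add continuous_snd) continuous_const))

lemma eventually_mem_triangle {L H : ℝ} {z : ℝ × ℝ} (h₁ : L < z.1) (h₂ : 0 < z.2)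
    (h₁₂ : z.1 + z.2 < H) : ∀ᶠ q in 𝓝 z, q ∈ triangle L H := by
  filter_upwards [(continuous_fst.tendsto z).eventually (lt_mem_nhds h₁),
    (continuous_snd.tendsto z).eventually (lt_mem_nhds h₂),
    ((continuous_fst.add continuous_snd).tendsto z).eventually (gt_mem_nhds h₁₂)]
    with q hq₁ hq₂ hq₃ using ⟨hq₁.le, hq₂.le, hq₃.le⟩

end Triangle

section LandscapeClamp
variable {n p k : ℕ} {x cl d : Fin n → ℝ} {Γ : ℝ} {L H : ℝ}

lemma sum_max_sub_zero_sub_clamp (hx : x ∈ selPhi n p) (hd : ∀ i, 0 ≤ d i)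
    (hL : ∀ i, L ≤ cl i) (hH : ∀ i, cl i + d i ≤ H) (q : ℝ × ℝ) :
    ∑ i, max (q.1 + q.2 * x i - cl i) 0 - ∑ i, max (max L (min (q.1 + q.2 * x i) H) - cl i) 0
      = (n - p) * max (q.1 - H) 0 + p * max (q.1 + q.2 - H) 0 := by
  rw [← Finset.sum_sub_distrib]
  simp only [max_sub_zero_sub_clamp (hL _) ((le_add_of_nonneg_right (hd _)).trans (hH _)),
    apply_add_mul_of_zero_or_one (hx.1 _) fun t => max (t - H) 0, Finset.sum_add_distrib,
    ← Finset.sum_mul, Finset.sum_sub_distrib, hx.2, Finset.sum_const, Finset.card_univ,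
    Fintype.card_fin, nsmul_eq_mul, mul_one]

lemma exists_mem_triangle_landscape_le (hx : x ∈ selPhi n p) (hkp : k ≤ p) (hkn : k + p ≤ n)
    (hd : ∀ i, 0 ≤ d i) (hL : ∀ i, L ≤ cl i) (hH : ∀ i, cl i + d i ≤ H) (hLH : L ≤ H)
    {q : ℝ × ℝ} (hq : 0 ≤ q.2) :
    ∃ q' ∈ triangle L H, landscape p k x cl d Γ q ≤ landscape p k x cl d Γ q' := by
  obtain ⟨u, v, hu, hv⟩ : ∃ u v, u = max L (min q.1 H) ∧ v = max L (min (q.1 + q.2) H) :=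
    ⟨_, _, rfl, rfl⟩
  have huv : u ≤ v := hu ▸ hv ▸ max_le_max le_rfl (min_le_min_right _ (by linarith))
  refine ⟨(u, v - u), ⟨hu ▸ le_max_left _ _, sub_nonneg.2 huv, by
    simpa only [add_sub_cancel, hv] using max_le hLH (min_le_right _ _)⟩, ?_⟩
  have hτ : ∀ i, u + (v - u) * x i = max L (min (q.1 + q.2 * x i) H) := fun i => by
    rw [apply_add_mul_of_zero_or_one (hx.1 i) fun t => max L (min t H), hu, hv]; ring
  have hΘ := sum_max_sub_zero_sub_clamp hx hd hL hH q
  simp only [landscape, dualObj, hτ, min_max_sub_clamp (hL _) (hH _) (hd _)]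
  have hkn' : (k : ℝ) + p ≤ n := by exact_mod_cast hkn
  have hkp' : (k : ℝ) ≤ p := by exact_mod_cast hkp
  have hu' := mul_le_mul_of_nonneg_left (hu ▸ sub_clamp_le hLH q.1) (Nat.cast_nonneg k)
  have hv' := mul_le_mul_of_nonneg_left (hv ▸ sub_clamp_le hLH (q.1 + q.2))
    (by linarith : (0 : ℝ) ≤ p - k)
  have hA := mul_le_mul_of_nonneg_right (by linarith : (k : ℝ) ≤ n - p) (le_max_right (q.1 - H) 0)
  have hB := mul_le_mul_of_nonneg_right (by linarith : (p : ℝ) - k ≤ p)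
    (le_max_right (q.1 + q.2 - H) 0)
  linarith

end LandscapeClamp

section LocallyAffine
variable {E : Type*} [NormedAddCommGroup E] [NormedSpace ℝ E]

lemma tendsto_add_smul_nhds_zero (z w : E) : Tendsto (fun t : ℝ => z + t • w) (𝓝 0) (𝓝 z) := by
  have : Continuous fun t : ℝ => z + t • w := by fun_prop
  simpa using this.tendsto 0

def IsLocallyAffineAt (f : E → ℝ) (z : E) : Prop := ∃ φ : E →ᵃ[ℝ] ℝ, f =ᶠ[𝓝 z] φ

namespace IsLocallyAffineAt
variable {f g : E → ℝ} {z : E}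

lemma congr (hf : IsLocallyAffineAt f z) (h : f =ᶠ[𝓝 z] g) : IsLocallyAffineAt g z :=
  let ⟨φ, hφ⟩ := hf; ⟨φ, h.symm.trans hφ⟩

lemma of_affineMap (φ : E →ᵃ[ℝ] ℝ) : IsLocallyAffineAt φ z := ⟨φ, .rfl⟩

lemma const (c : ℝ) : IsLocallyAffineAt (fun _ => c) z := of_affineMap (AffineMap.const ℝ E c)

lemma add (hf : IsLocallyAffineAt f z) (hg : IsLocallyAffineAt g z) :
    IsLocallyAffineAt (fun q => f q + g q) z :=
  let ⟨φ, hφ⟩ := hf; let ⟨ψ, hψ⟩ := hg; ⟨φ + ψ, hφ.add hψ⟩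

lemma const_mul (hf : IsLocallyAffineAt f z) (c : ℝ) : IsLocallyAffineAt (fun q => c * f q) z :=
  let ⟨φ, hφ⟩ := hf; ⟨c • φ, hφ.const_smul c⟩

lemma mul_const (hf : IsLocallyAffineAt f z) (c : ℝ) : IsLocallyAffineAt (fun q => f q * c) z :=
  (hf.const_mul c).congr (.of_forall fun q => mul_comm c (f q))

lemma neg (hf : IsLocallyAffineAt f z) : IsLocallyAffineAt (fun q => -f q) z :=
  let ⟨φ, hφ⟩ := hf; ⟨-φ, hφ.neg⟩

lemma sub (hf : IsLocallyAffineAt f z) (hg : IsLocallyAffineAt g z) :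
    IsLocallyAffineAt (fun q => f q - g q) z := by
  simpa only [sub_eq_add_neg] using hf.add hg.neg

lemma sum {ι : Type*} (s : Finset ι) {f : ι → E → ℝ} (hf : ∀ i ∈ s, IsLocallyAffineAt (f i) z) :
    IsLocallyAffineAt (fun q => ∑ i ∈ s, f i q) z := by
  classical
  induction s using Finset.induction_on with
  | empty => simpa using const 0
  | insert i s hi ih =>
    simp only [Finset.sum_insert hi]
    exact (hf i (s.mem_insert_self i)).add (ih fun j hj => hf j (Finset.mem_insert_of_mem hj))

lemma fst {F : Type*} [NormedAddCommGroup F] [NormedSpace ℝ F] {z : ℝ × F} :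
    IsLocallyAffineAt (fun q : ℝ × F => q.1) z :=
  of_affineMap (LinearMap.fst ℝ ℝ F).toAffineMap

lemma snd {F : Type*} [NormedAddCommGroup F] [NormedSpace ℝ F] {z : F × ℝ} :
    IsLocallyAffineAt (fun q : F × ℝ => q.2) z :=
  of_affineMap (LinearMap.snd ℝ F ℝ).toAffineMap

lemma max_zero [FiniteDimensional ℝ E] (hf : IsLocallyAffineAt f z) (hz : f z ≠ 0) :
    IsLocallyAffineAt (fun q => max (f q) 0) z := by
  have hcont : ContinuousAt f z := by
    obtain ⟨φ, hφ⟩ := hf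
    exact φ.continuous_of_finiteDimensional.continuousAt.congr hφ.symm
  rcases hz.lt_or_gt with hneg | hpos
  · exact (const 0).congr <| (hcont.eventually_lt continuousAt_const hneg).mono
      fun q hq => (max_eq_right hq.le).symm
  · exact hf.congr <|
      (continuousAt_const.eventually_lt hcont hpos).mono fun q hq => (max_eq_left hq.le).symm

/-- Along a line in the kernel of the difference of the linear parts, `min f g` is affine. -/
lemma exists_eventually_min_eq [FiniteDimensional ℝ E] (hE : 1 < finrank ℝ E)
    (hf : IsLocallyAffineAt f z) (hg : IsLocallyAffineAt g z)
    (hmax : IsLocalMax (fun q => min (f q) (g q)) z) :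
    ∃ w : E, w ≠ 0 ∧ ∀ᶠ t in 𝓝 (0 : ℝ), min (f (z + t • w)) (g (z + t • w)) = min (f z) (g z) := by
  obtain ⟨φ, hφ⟩ := hf
  obtain ⟨ψ, hψ⟩ := hg
  obtain ⟨w, hw, hw0⟩ := Submodule.ne_bot_iff _ |>.1 <|
    LinearMap.ker_ne_bot_of_finrank_lt (f := φ.linear - ψ.linear) (by rwa [finrank_self])
  have hwψ : ψ.linear w = φ.linear w := (sub_eq_zero.1 hw).symm
  have hline := tendsto_add_smul_nhds_zero z w
  have hφline : ∀ (χ : E →ᵃ[ℝ] ℝ) (t : ℝ), χ (z + t • w) = χ z + t * χ.linear w := fun χ t => by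
    rw [add_comm, ← vadd_eq_add, χ.map_vadd, map_smul, vadd_eq_add, smul_eq_mul, add_comm]
  have haffine : ∀ᶠ t in 𝓝 (0 : ℝ),
      min (f (z + t • w)) (g (z + t • w)) = min (f z) (g z) + t * φ.linear w := by
    filter_upwards [hline.eventually hφ, hline.eventually hψ] with t h₁ h₂
    rw [h₁, h₂, hφ.eq_of_nhds, hψ.eq_of_nhds, hφline, hφline, hwψ, min_add_add_right]
  have hmax' : IsLocalMax (fun t : ℝ => min (f z) (g z) + t * φ.linear w) 0 := by
    filter_upwards [haffine, hline.eventually hmax] with t h₁ h₂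
    simpa [h₁] using h₂
  have hσ : φ.linear w = 0 := hmax'.hasDerivAt_eq_zero <| by
    simpa using ((hasDerivAt_id (0 : ℝ)).mul_const (φ.linear w)).const_add (min (f z) (g z))
  exact ⟨w, hw0, haffine.mono fun t ht => by rw [ht, hσ, mul_zero, add_zero]⟩

end IsLocallyAffineAt

end LocallyAffine

lemma not_eventually_add_smul_mem_of_isMaxOn {M : Set (ℝ × ℝ)} {z w : ℝ × ℝ}
    (hz : IsMaxOn (fun q : ℝ × ℝ => q.1 ^ 2 + q.2 ^ 2) M z) (hw : w ≠ 0) :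
    ¬ ∀ᶠ t in 𝓝 (0 : ℝ), z + t • w ∈ M := by
  intro h
  obtain ⟨ε, hε, hball⟩ := Metric.eventually_nhds_iff.1 h
  have hplus := isMaxOn_iff.1 hz _ (hball (y := ε / 2) (by simp [abs_of_pos hε]; linarith))
  have hminus := isMaxOn_iff.1 hz _ (hball (y := -(ε / 2)) (by simp [abs_of_pos hε]; linarith))
  simp only [Prod.fst_add, Prod.snd_add, Prod.smul_fst, Prod.smul_snd, smul_eq_mul] at hplus hminus
  have hsq : (ε / 2) ^ 2 * (w.1 ^ 2 + w.2 ^ 2) ≤ 0 := by nlinarith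
  have hw' : w.1 ^ 2 + w.2 ^ 2 ≤ 0 := by nlinarith [pow_pos (half_pos hε) 2]
  have h₁ : w.1 ^ 2 = 0 := le_antisymm (by nlinarith [sq_nonneg w.2]) (sq_nonneg _)
  have h₂ : w.2 ^ 2 = 0 := le_antisymm (by nlinarith [sq_nonneg w.1]) (sq_nonneg _)
  exact hw (Prod.ext (pow_eq_zero_iff two_ne_zero |>.1 h₁) (pow_eq_zero_iff two_ne_zero |>.1 h₂))

section LandscapeLocal
variable {ι : Type*} [Fintype ι] {p k : ℕ} {x cl d : ι → ℝ} {Γ : ℝ}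

lemma min_eq_max_zero_sub {d : ℝ} (hd : 0 ≤ d) (a : ℝ) :
    min d (max a 0) = max a 0 - max (a - d) 0 := by
  simp only [max_def, min_def]; split_ifs <;> linarith

lemma exists_eventually_landscape_eq (hx : ∀ i, x i = 0 ∨ x i = 1) (hd : ∀ i, 0 ≤ d i)
    {z : ℝ × ℝ} (hz₁ : z.1 ∉ breakpoints cl d) (hz₂ : z.1 + z.2 ∉ breakpoints cl d)
    (hmax : IsLocalMax (landscape p k x cl d Γ) z) :
    ∃ w : ℝ × ℝ, w ≠ 0 ∧
      ∀ᶠ t in 𝓝 (0 : ℝ), landscape p k x cl d Γ (z + t • w) = landscape p k x cl d Γ z := by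
  have hτ : ∀ i, z.1 + z.2 * x i ∉ breakpoints cl d := fun i => by
    rcases hx i with h | h <;> simpa [h]
  have hlin : ∀ i (c : ℝ), IsLocallyAffineAt (fun q : ℝ × ℝ => q.1 + q.2 * x i - c) z :=
    fun i c => (IsLocallyAffineAt.fst.add (IsLocallyAffineAt.snd.mul_const (x i))).sub
      (.const c)
  have hne₁ : ∀ i, z.1 + z.2 * x i - cl i ≠ 0 := fun i h =>
    hτ i (Or.inl ⟨i, by linarith⟩)
  have hne₂ : ∀ i, z.1 + z.2 * x i - cl i - d i ≠ 0 := fun i h =>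
    hτ i (Or.inr ⟨i, by linarith⟩)
  have hdual : IsLocallyAffineAt (fun q : ℝ × ℝ => dualObj p k x cl q.1 q.2) z :=
    ((IsLocallyAffineAt.fst.const_mul p).add (IsLocallyAffineAt.snd.const_mul _)).sub
      (.sum _ fun i _ => (hlin i (cl i)).max_zero (hne₁ i))
  have hbudget : IsLocallyAffineAt
      (fun q : ℝ × ℝ => ∑ i, min (d i) (max (q.1 + q.2 * x i - cl i) 0)) z := by
    simp only [min_eq_max_zero_sub (hd _)]
    exact .sum _ fun i _ => ((hlin i (cl i)).max_zero (hne₁ i)).sub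
      (((hlin i (cl i)).sub (.const (d i))).max_zero (hne₂ i))
  have hF : landscape p k x cl d Γ = fun q => min (dualObj p k x cl q.1 q.2 + Γ)
      (dualObj p k x cl q.1 q.2 + ∑ i, min (d i) (max (q.1 + q.2 * x i - cl i) 0)) :=
    funext fun q => (min_add_add_left _ _ _).symm
  rw [hF] at hmax ⊢
  exact (hdual.add (.const Γ)).exists_eventually_min_eq (by simp) (hdual.add hbudget) hmax

end LandscapeLocal

section LandscapeMax
variable {n p k : ℕ} {x cl d : Fin n → ℝ} {Γ : ℝ}

lemma continuous_landscape : Continuous (landscape p k x cl d Γ) := by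
  unfold landscape dualObj
  fun_prop

theorem exists_isMax_landscape_mem_breakpoints [NeZero n] (hx : x ∈ selPhi n p) (hkp : k ≤ p)
    (hkn : k + p ≤ n) (hd : ∀ i, 0 ≤ d i) :
    ∃ z : ℝ × ℝ, 0 ≤ z.2 ∧
      (∀ q : ℝ × ℝ, 0 ≤ q.2 → landscape p k x cl d Γ q ≤ landscape p k x cl d Γ z) ∧
      (z.2 = 0 ∨ z.1 ∈ breakpoints cl d ∨ z.1 + z.2 ∈ breakpoints cl d) := by
  set F := landscape p k x cl d Γ
  obtain ⟨i₀, hi₀⟩ := Finite.exists_min cl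
  obtain ⟨i₁, hi₁⟩ := Finite.exists_max fun i => cl i + d i
  set K := triangle (cl i₀) (cl i₁ + d i₁)
  have hLH : cl i₀ ≤ cl i₁ + d i₁ := (hi₀ i₁).trans (le_add_of_nonneg_right (hd i₁))
  obtain ⟨z₀, hz₀K, hz₀⟩ := (isCompact_triangle _ _).exists_isMaxOn
    ⟨(cl i₀, 0), le_rfl, le_rfl, by simpa⟩ continuous_landscape.continuousOn
  obtain ⟨z, ⟨hzK, hzF⟩, hz⟩ := ((isCompact_triangle _ _).inter_right
    (isClosed_singleton.preimage continuous_landscape)).exists_isMaxOn ⟨z₀, hz₀K, rfl⟩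
    (by fun_prop : Continuous fun q : ℝ × ℝ => q.1 ^ 2 + q.2 ^ 2).continuousOn
  have hzK_max : ∀ q ∈ K, F q ≤ F z := fun q hq => (hz₀ hq).trans_eq hzF.symm
  refine ⟨z, hzK.2.1, fun q hq => ?_, ?_⟩
  · obtain ⟨q', hq'K, hle⟩ := exists_mem_triangle_landscape_le hx hkp hkn hd hi₀ hi₁ hLH hq
    exact hle.trans (hzK_max q' hq'K)
  by_contra! hcon
  obtain ⟨h₂, h₁, h₁₂⟩ := hcon
  have hnear : ∀ᶠ q in 𝓝 z, q ∈ K := eventually_mem_triangle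
    (hzK.1.lt_of_ne fun h => h₁ (Or.inl ⟨i₀, h⟩)) (hzK.2.1.lt_of_ne (Ne.symm h₂))
    (hzK.2.2.lt_of_ne fun h => h₁₂ (Or.inr ⟨i₁, h.symm⟩))
  obtain ⟨w, hw, hline⟩ := exists_eventually_landscape_eq hx.1 hd h₁ h₁₂ (hnear.mono hzK_max)
  refine not_eventually_add_smul_mem_of_isMaxOn hz hw ?_
  filter_upwards [(tendsto_add_smul_nhds_zero z w).eventually hnear, hline] with t ht hFt
  exact ⟨ht, hFt.trans hzF⟩

end LandscapeMax

theorem stmt3_general (n p k : ℕ) (hk1 : 1 ≤ k) (hkp : k < p) (hknp : k ≤ n - p)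
    (x : Fin n → ℝ) (hx : x ∈ selPhi n p)
    (cl d : Fin n → ℝ) (hd : ∀ i, 0 ≤ d i)
    (Γ : ℝ) (hΓ : 0 ≤ Γ) :
    let D : Set ℝ := Set.range cl ∪ Set.range (fun i => cl i + d i)
    let g : (Fin n → ℝ) → ℝ → ℝ → ℝ := fun c α β =>
      (p : ℝ) * α + ((p : ℝ) - (k : ℝ)) * β - ∑ i, max (α + β * x i - c i) 0
    ∃ c ∈ Uc n cl d Γ, ∃ α β : ℝ, 0 ≤ β ∧
      (∀ c' ∈ Uc n cl d Γ, ∀ α' β' : ℝ, 0 ≤ β' → g c' α' β' ≤ g c α β) ∧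
      IsGreatest {v | ∃ c' ∈ Uc n cl d Γ, v = incVal n (selPhiK n p k x) c'}
        (g c α β) ∧
      (β = 0 ∨ α ∈ D ∨ α + β ∈ D) := by
  intro D g
  have : NeZero n := ⟨by omega⟩
  obtain ⟨z, hz0, hzmax, hzD⟩ :=
    exists_isMax_landscape_mem_breakpoints (Γ := Γ) (cl := cl) hx hkp.le (by omega) hd
  obtain ⟨c, hc, hcz⟩ := exists_dualObj_eq_landscape (p := p) (k := k) (x := x) hd hΓ z.1 z.2
  have hg_le : ∀ c' ∈ Uc n cl d Γ, ∀ α' β' : ℝ, 0 ≤ β' → g c' α' β' ≤ g c z.1 z.2 :=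
    fun c' hc' α' β' hβ' =>
      ((dualObj_le_landscape hc' α' β').trans (hzmax _ hβ')).trans_eq hcz.symm
  have hincVal_le : ∀ c' ∈ Uc n cl d Γ, incVal n (selPhiK n p k x) c' ≤ g c z.1 z.2 := by
    intro c' hc'
    obtain ⟨α, β, hβ, h⟩ := exists_dualObj_eq_incVal hk1 hkp.le hx c'
    exact h ▸ hg_le c' hc' α β hβ
  refine ⟨c, hc, z.1, z.2, hz0, hg_le, ⟨⟨c, hc, ?_⟩, ?_⟩, hzD⟩
  · exact le_antisymm (dualObj_le_incVal hx c z.1 hz0) (hincVal_le c hc)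
  · rintro _ ⟨c', hc', rfl⟩
    exact hincVal_le c' hc'

/-- The supremum of the dual adversarial objective is attained at a triple with
`β = 0`, or `α ∈ D`, or `α + β ∈ D`, and equals the adversarial optimum. -/
theorem stmt3 (n p k : ℕ) (hk1 : 1 ≤ k) (hkp : k < p) (hpn : p ≤ n) (hknp : k ≤ n - p)
    (x : Fin n → ℝ) (hx : x ∈ selPhi n p)
    (cl d : Fin n → ℝ) (hcl : ∀ i, 0 ≤ cl i) (hd : ∀ i, 0 ≤ d i)
    (Γ : ℝ) (hΓ : 0 ≤ Γ) :
    let D : Set ℝ := Set.range cl ∪ Set.range (fun i => cl i + d i)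
    let g : (Fin n → ℝ) → ℝ → ℝ → ℝ := fun c α β =>
      (p : ℝ) * α + ((p : ℝ) - (k : ℝ)) * β - ∑ i, max (α + β * x i - c i) 0
    ∃ c ∈ Uc n cl d Γ, ∃ α β : ℝ, 0 ≤ β ∧
      (∀ c' ∈ Uc n cl d Γ, ∀ α' β' : ℝ, 0 ≤ β' → g c' α' β' ≤ g c α β) ∧
      IsGreatest {v | ∃ c' ∈ Uc n cl d Γ, v = incVal n (selPhiK n p k x) c'}
        (g c α β) ∧
      (β = 0 ∨ α ∈ D ∨ α + β ∈ D) :=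
  stmt3_general n p k hk1 hkp hknp x hx cl d hd Γ hΓ
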